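/- Let w : ℕ → [0,∞) with Σ_n w n = ∞ and w n → 0, let 𝓕 be a hereditary family of finite subsets of ℕ, and let ε > 0. If for every finite S ⊆ ℕ with Σ_{i∈S} w i > 0 there is F ∈ 𝓕 with Σ_{i∈F∩S} w i ≥ ε · Σ_{i∈S} w i, then 𝓕 is not compact: the set of characteristic functions of members of 𝓕 is not a compact subset of the Cantor space ℕ → Bool. -/

import Mathlib

open Filter Topology

open Classical in
/-- The characteristic function of a set of naturals, as an element of the Cantor space. -/
noncomputable def chi (A : Set ℕ) : ℕ → Bool := fun n => decide (n ∈ A)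

set_option maxHeartbeats 1000000

noncomputable def WellFounded.rank {α : Type*} {r : α → α → Prop} (hwf : WellFounded r) (a : α) :
    Ordinal := (hwf.apply a).rank

theorem WellFounded.rank_lt_of_rel {α : Type*} {r : α → α → Prop} (hwf : WellFounded r) {a b : α}
    (h : r a b) : hwf.rank a < hwf.rank b :=
  Acc.rank_lt_of_rel _ h

private lemma baseSet (w : ℕ → ℝ) (hwnonneg : ∀ n, 0 ≤ w n)
    (hwdiv : ¬ Summable w) (hw0 : Tendsto w atTop (𝓝 0)) (η T : ℝ) (hη : 0 < η) (hT : 0 < T)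
    (m : ℕ) : ∃ s : Finset ℕ, (∀ x ∈ s, m ≤ x) ∧ (∀ x ∈ s, w x < η) ∧
      T ≤ ∑ i ∈ s, w i ∧ (∑ i ∈ s, w i) ≤ T + η := by
  obtain ⟨m₀, hm₀⟩ := Filter.eventually_atTop.1 (hw0.eventually_lt_const hη)
  set m₃ := max m m₀ with hm₃
  have hsmall : ∀ x, m₃ ≤ x → w x < η := fun x hx => hm₀ x (le_trans (le_max_right _ _) hx)
  have hdiv : Tendsto (fun n => ∑ i ∈ Finset.range n, w i) atTop atTop :=
    (not_summable_iff_tendsto_nat_atTop_of_nonneg hwnonneg).1 hwdiv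
  have hG : Tendsto (fun n => ∑ i ∈ Finset.Ico m₃ n, w i) atTop atTop := by
    apply Tendsto.congr' _
      (tendsto_atTop_add_const_right atTop (-(∑ i ∈ Finset.range m₃, w i)) hdiv)
    filter_upwards [eventually_ge_atTop m₃] with n hn
    rw [Finset.sum_Ico_eq_sub _ hn]; ring
  have hex : ∃ n, T ≤ ∑ i ∈ Finset.Ico m₃ n, w i := (hG.eventually_ge_atTop T).exists
  have hspec := Nat.find_spec hex
  cases hfind : Nat.find hex with
  | zero =>
      exfalso
      rw [hfind] at hspec
      rw [Finset.Ico_eq_empty (by omega)] at hspec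
      simp at hspec
      linarith
  | succ k =>
      rw [hfind] at hspec
      have hkmin : ¬ T ≤ ∑ i ∈ Finset.Ico m₃ k, w i := Nat.find_min hex (by omega)
      have hkm₃ : m₃ ≤ k := by
        by_contra hc
        rw [Finset.Ico_eq_empty (by omega)] at hspec
        simp at hspec
        linarith
      have hsum : ∑ i ∈ Finset.Ico m₃ (k+1), w i = (∑ i ∈ Finset.Ico m₃ k, w i) + w k :=
        Finset.sum_Ico_succ_top hkm₃ _
      refine ⟨Finset.Ico m₃ (k+1), ?_, ?_, hspec, ?_⟩
      · intro x hx
        have := (Finset.mem_Ico.1 hx).1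
        omega
      · intro x hx
        exact hsmall x (Finset.mem_Ico.1 hx).1
      · have h1 : w k < η := hsmall k hkm₃
        rw [hsum]
        push_neg at hkmin
        linarith


private lemma mainLemma (w : ℕ → ℝ) (hwnonneg : ∀ n, 0 ≤ w n)
    (hwdiv : ¬ Summable w) (hw0 : Tendsto w atTop (𝓝 0))
    (𝓕 : Set (Set ℕ)) (hher : ∀ F ∈ 𝓕, ∀ G ⊆ F, G ∈ 𝓕)
    (hwf : WellFounded (fun E' E : Finset ℕ =>
      (↑E' : Set ℕ) ∈ 𝓕 ∧ ∃ a ∉ E, E' = insert a E))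
    (o : Ordinal) :
    ∀ ℰ : Finset (Finset ℕ), ℰ.sup hwf.rank ≤ o →
    ∀ δ η T : ℝ, 0 < δ → 0 < η → 0 < T → ∀ (A : Finset ℕ) (m : ℕ),
    ∃ s : Finset ℕ, (∀ x ∈ s, m ≤ x) ∧ (∀ x ∈ s, w x < η) ∧
      T ≤ ∑ i ∈ s, w i ∧ (∑ i ∈ s, w i) ≤ 2*T ∧
      ∀ a ∈ A ∪ s, ∀ F ⊆ s, (∀ x ∈ F, a < x) →
        (∃ E ∈ ℰ, (↑(E ∪ insert a F) : Set ℕ) ∈ 𝓕) →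
        (∑ i ∈ F, w i) < δ * ∑ i ∈ s, w i := by
  induction o using Ordinal.induction with
  | h o IH =>
  intro ℰ hℰo δ η T hδ hη hT A m
  classical
  set μ : Finset ℕ → ℝ := fun s => ∑ i ∈ s, w i with hμdef
  have hμnonneg : ∀ s, 0 ≤ μ s := fun s => Finset.sum_nonneg (fun i _ => hwnonneg i)
  have hμmono : ∀ {s t : Finset ℕ}, s ⊆ t → μ s ≤ μ t := fun {s t} hst =>
    Finset.sum_le_sum_of_subset_of_nonneg hst (fun i _ _ => hwnonneg i)
  have hherF : ∀ X Y : Finset ℕ, X ⊆ Y → (↑Y : Set ℕ) ∈ 𝓕 → (↑X : Set ℕ) ∈ 𝓕 :=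
    fun X Y h hY => hher _ hY _ (Finset.coe_subset.2 h)
  set δ' : ℝ := δ/8 with hδ'def
  have hδ' : 0 < δ' := by positivity
  set N : ℕ := ⌈(16:ℝ)/δ⌉₊ with hNdef
  have hNge : (16:ℝ)/δ ≤ N := Nat.le_ceil _
  have hNpos : (0:ℝ) < N := lt_of_lt_of_le (by positivity) hNge

  have hN0 : 0 < N := by exact_mod_cast hNpos
  have h2N : (2:ℝ)/N ≤ δ/8 := by
    rw [div_le_iff₀ hNpos]
    have h16 : (16:ℝ)/δ ≤ (N:ℝ) := hNge
    rw [div_le_iff₀ hδ] at h16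
    nlinarith
  set T1 : ℝ := T / N with hT1def
  have hT1 : 0 < T1 := by positivity
  have hN1R : (1:ℝ) ≤ N := by exact_mod_cast hN0
  have hT1T : T1 ≤ T := by
    rw [hT1def, div_le_iff₀ hNpos]
    nlinarith
  have hNT1 : (N:ℝ) * T1 = T := by rw [hT1def]; field_simp [hNpos.ne']
  have hNT2 : (N:ℝ) * (2*T1) = 2*T := by linear_combination (2:ℝ) * hNT1
  set η1 : ℝ := min η (δ' * T1) with hη1def
  have hη1 : 0 < η1 := lt_min hη (by positivity)
  have hη1η : η1 ≤ η := min_le_left _ _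
  have hη1T : η1 ≤ δ' * T1 := min_le_right _ _
  set m' : ℕ := max m ((ℰ.sup (fun E => E.sup id)) + 1) with hm'def
  have hm'E : ∀ x : ℕ, m' ≤ x → ∀ E ∈ ℰ, x ∉ E := by
    intro x hx E hE hxE
    have h1 : x ≤ E.sup id := Finset.le_sup (f := id) hxE
    have h2 : E.sup id ≤ ℰ.sup (fun E => E.sup id) := Finset.le_sup (f := fun E => E.sup id) hE
    omega
  set mst : Finset ℕ → ℕ := fun B => max m' (B.sup id + 1) with hmstdef
  have hmstm' : ∀ B, m' ≤ mst B := fun B => le_max_left _ _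
  have hmstgt : ∀ B : Finset ℕ, ∀ x ∈ B, x < mst B := by
    intro B x hx
    have h1 : x ≤ B.sup id := Finset.le_sup (f := id) hx
    have : B.sup id + 1 ≤ mst B := le_max_right _ _
    omega
  set child : Finset ℕ → Finset (Finset ℕ) := fun B =>
    (ℰ.biUnion (fun E => B.image (fun a => insert a E))).filter
      (fun E'' => (↑E'' : Set ℕ) ∈ 𝓕 ∧ ∃ a ∈ B, ∃ E ∈ ℰ, a ∉ E ∧ E'' = insert a E)
    with hchilddef
  have hchild_mem : ∀ (B : Finset ℕ) (E'' : Finset ℕ), E'' ∈ child B ↔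
      ((↑E'' : Set ℕ) ∈ 𝓕 ∧ ∃ a ∈ B, ∃ E ∈ ℰ, a ∉ E ∧ E'' = insert a E) := by
    intro B E''
    rw [hchilddef, Finset.mem_filter]
    constructor
    · rintro ⟨-, h⟩; exact h
    · rintro ⟨h1, a, ha, E, hE, haE, rfl⟩
      refine ⟨?_, h1, a, ha, E, hE, haE, rfl⟩
      rw [Finset.mem_biUnion]
      exact ⟨E, hE, Finset.mem_image.2 ⟨a, ha, rfl⟩⟩
  -- the piece-picking lemma
  have hpick : ∀ B : Finset ℕ, ∃ s : Finset ℕ, (∀ x ∈ s, mst B ≤ x) ∧ (∀ x ∈ s, w x < η1) ∧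
      T1 ≤ μ s ∧ μ s ≤ 2*T1 ∧
      ∀ a ∈ (A ∪ B) ∪ s, ∀ F ⊆ s, (∀ x ∈ F, a < x) →
        (∃ E ∈ child (A ∪ B), (↑(E ∪ insert a F) : Set ℕ) ∈ 𝓕) →
        μ F < δ' * μ s := by
    intro B
    by_cases hcb : child (A ∪ B) = ∅
    · obtain ⟨s, hs1, hs2, hs3, hs4⟩ := baseSet w hwnonneg hwdiv hw0 (min η1 T1) T1
        (lt_min hη1 hT1) hT1 (mst B)
      refine ⟨s, hs1, fun x hx => lt_of_lt_of_le (hs2 x hx) (min_le_left _ _), hs3, ?_, ?_⟩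
      · have : min η1 T1 ≤ T1 := min_le_right _ _
        calc μ s ≤ T1 + min η1 T1 := hs4
        _ ≤ 2*T1 := by linarith
      · intro a _ F _ _ hex
        exfalso
        obtain ⟨E, hE, -⟩ := hex
        rw [hcb] at hE
        exact Finset.notMem_empty _ hE
    · have hne : (child (A ∪ B)).Nonempty := Finset.nonempty_iff_ne_empty.2 hcb
      have hsupbot : ⊥ < ℰ.sup hwf.rank := by
        obtain ⟨E₀, hE₀⟩ := hne
        obtain ⟨hmemF, a, ha, E, hE, haE, hEq⟩ := (hchild_mem _ E₀).1 hE₀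
        have hrel : hwf.rank E₀ < hwf.rank E := hwf.rank_lt_of_rel ⟨by rw [hEq] at hmemF ⊢; exact hmemF, a, haE, hEq⟩
        calc ⊥ ≤ hwf.rank E₀ := bot_le
        _ < hwf.rank E := hrel
        _ ≤ ℰ.sup hwf.rank := Finset.le_sup hE
      have hlt : (child (A ∪ B)).sup hwf.rank < o := by
        apply lt_of_lt_of_le _ hℰo
        rw [Finset.sup_lt_iff hsupbot]
        intro E'' hE''
        obtain ⟨hmemF, a, ha, E, hE, haE, hEq⟩ := (hchild_mem _ E'').1 hE''
        have hrel : hwf.rank E'' < hwf.rank E := hwf.rank_lt_of_rel ⟨hmemF, a, haE, hEq⟩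
        exact lt_of_lt_of_le hrel (Finset.le_sup hE)
      exact IH _ hlt (child (A ∪ B)) le_rfl δ' η1 T1 hδ' hη1 hT1 (A ∪ B) (mst B)
  set pick : Finset ℕ → Finset ℕ := fun B => Classical.choose (hpick B) with hpickdef
  have hps : ∀ B : Finset ℕ, (∀ x ∈ pick B, mst B ≤ x) ∧ (∀ x ∈ pick B, w x < η1) ∧
      T1 ≤ μ (pick B) ∧ μ (pick B) ≤ 2*T1 ∧
      ∀ a ∈ (A ∪ B) ∪ pick B, ∀ F ⊆ pick B, (∀ x ∈ F, a < x) →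
        (∃ E ∈ child (A ∪ B), (↑(E ∪ insert a F) : Set ℕ) ∈ 𝓕) →
        μ F < δ' * μ (pick B) := fun B => Classical.choose_spec (hpick B)
  set U : ℕ → Finset ℕ := fun j => Nat.rec ∅ (fun _ Uj => Uj ∪ pick Uj) j with hUdef
  have hU0 : U 0 = ∅ := rfl
  have hUsucc : ∀ j, U (j+1) = U j ∪ pick (U j) := fun j => rfl
  -- invariants
  have I1 : ∀ j, ∀ x ∈ U j, m' ≤ x ∧ w x < η1 := by
    intro j
    induction j with
    | zero => intro x hx; rw [hU0] at hx; exact absurd hx (Finset.notMem_empty x)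
    | succ j ih =>
        intro x hx
        rw [hUsucc, Finset.mem_union] at hx
        rcases hx with hx | hx
        · exact ih x hx
        · exact ⟨le_trans (hmstm' _) ((hps (U j)).1 x hx), (hps (U j)).2.1 x hx⟩
  have I2 : ∀ j, ∀ x ∈ U j, ∀ y ∈ pick (U j), x < y := by
    intro j x hx y hy
    have h1 : mst (U j) ≤ y := (hps (U j)).1 y hy
    have h2 : x < mst (U j) := hmstgt _ x hx
    omega
  have I3 : ∀ j k, j ≤ k → U j ⊆ U k := by
    intro j k hjk
    induction k with
    | zero => rw [Nat.le_zero] at hjk; rw [hjk]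
    | succ k ih =>
        rcases Nat.lt_or_ge j (k+1) with h | h
        · have := ih (by omega)
          rw [hUsucc]
          exact this.trans Finset.subset_union_left
        · have : j = k + 1 := by omega
          rw [this]
  have I4 : ∀ j, Disjoint (U j) (pick (U j)) := by
    intro j
    rw [Finset.disjoint_left]
    intro x hx hx'
    exact absurd rfl (I2 j x hx x hx').ne
  have hμadd : ∀ j, μ (U (j+1)) = μ (U j) + μ (pick (U j)) := by
    intro j
    rw [hUsucc]
    exact Finset.sum_union (I4 j)
  have I5 : ∀ j : ℕ, (j:ℝ)*T1 ≤ μ (U j) ∧ μ (U j) ≤ (j:ℝ)*(2*T1) := by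
    intro j
    induction j with
    | zero => simp [hU0, hμdef]
    | succ j ih =>
        have h1 := (hps (U j)).2.2.1
        have h2 := (hps (U j)).2.2.2.1
        rw [hμadd j]
        push_cast
        constructor <;> nlinarith [ih.1, ih.2]
  have I6 : ∀ j k, j ≤ k → ∀ y ∈ U k, y ∉ U j → ∀ x ∈ U j, x < y := by
    intro j k hjk
    induction k with
    | zero => intro y hy; rw [hU0] at hy; exact absurd hy (Finset.notMem_empty y)
    | succ k ih =>
        intro y hy hynot x hx
        rcases Nat.lt_or_ge j (k+1) with h | h
        · rw [hUsucc, Finset.mem_union] at hy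
          rcases hy with hy | hy
          · exact ih (by omega) y hy hynot x hx
          · exact I2 k x (I3 j k (by omega) hx) y hy
        · have hjk1 : j = k + 1 := by omega
          rw [hjk1] at hynot
          exact absurd hy hynot
  -- anchored bound on pieces
  have hab : ∀ (j : ℕ) (a : ℕ), a ∈ A ∪ U j → ∀ (F : Finset ℕ) (E : Finset ℕ), E ∈ ℰ → a ∉ E →
      F ⊆ pick (U j) → (∀ x ∈ F, a < x) → (↑(E ∪ insert a F) : Set ℕ) ∈ 𝓕 →
      μ F ≤ 2*δ'*μ (pick (U j)) := by
    intro j a ha F E hE haE hFsub hFlt hmemF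
    rcases Finset.eq_empty_or_nonempty F with rfl | hFne
    · have := (hps (U j)).2.2.1
      have : 0 < μ (pick (U j)) := lt_of_lt_of_le hT1 this
      simp only [Finset.sum_empty, hμdef]
      positivity
    · set a' := F.min' hFne with ha'def
      have ha'F : a' ∈ F := F.min'_mem hFne
      have hbad := (hps (U j)).2.2.2.2
      have key : μ (F.erase a') < δ' * μ (pick (U j)) := by
        apply hbad a' (Finset.mem_union_right _ (hFsub ha'F)) (F.erase a')
          ((Finset.erase_subset _ _).trans hFsub)
        · intro x hx
          rw [Finset.mem_erase] at hx
          exact lt_of_le_of_ne (F.min'_le x hx.2) (Ne.symm hx.1)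
        · refine ⟨insert a E, ?_, ?_⟩
          · rw [hchild_mem]
            constructor
            · apply hherF _ _ _ hmemF
              intro x hx
              rw [Finset.mem_insert] at hx
              rcases hx with rfl | hx
              · exact Finset.mem_union_right _ (Finset.mem_insert_self _ _)
              · exact Finset.mem_union_left _ hx
            · exact ⟨a, ha, E, hE, haE, rfl⟩
          · apply hherF _ _ _ hmemF
            intro x hx
            simp only [Finset.mem_union, Finset.mem_insert, Finset.mem_erase] at hx ⊢
            rcases hx with (rfl | hx) | (rfl | hx)
            · tauto
            · tauto
            · exact Or.inr (Or.inr ha'F)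
            · tauto
      have hwa' : w a' < δ' * μ (pick (U j)) := by
        have h1 : w a' < η1 := (hps (U j)).2.1 a' (hFsub ha'F)
        have h2 : T1 ≤ μ (pick (U j)) := (hps (U j)).2.2.1
        nlinarith
      have hsum : μ (F.erase a') + w a' = μ F := Finset.sum_erase_add F w ha'F
      nlinarith
  -- the global claim
  have hclaim : ∀ (a : ℕ) (F E : Finset ℕ), E ∈ ℰ → a ∉ E → a ∈ A ∪ U N → F ⊆ U N →
      (∀ x ∈ F, a < x) → ((↑(E ∪ insert a F) : Set ℕ) ∈ 𝓕) →
      ∀ j, j ≤ N → μ (F ∩ U j) ≤ (if a ∈ U j then 2*T1 else 0) + 2*δ'*μ (U j) := by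
    intro a F E hE haE haUN hFsub hFlt hmemF j
    induction j with
    | zero =>
        intro _
        rw [hU0]
        simp [hμdef]
    | succ j ihj =>
        intro hjN
        have ihj' := ihj (by omega)
        have hsplit : F ∩ U (j+1) = (F ∩ U j) ∪ (F ∩ pick (U j)) := by
          rw [hUsucc, Finset.inter_union_distrib_left]
        have hdisj : Disjoint (F ∩ U j) (F ∩ pick (U j)) :=
          (I4 j).mono Finset.inter_subset_right Finset.inter_subset_right
        have hadd : μ (F ∩ U (j+1)) = μ (F ∩ U j) + μ (F ∩ pick (U j)) := by
          rw [hsplit]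
          exact Finset.sum_union hdisj
        have hUmono : μ (U j) ≤ μ (U (j+1)) := hμmono (I3 j (j+1) (by omega))
        by_cases hcase : a ∈ A ∪ U j
        · have hpiece : μ (F ∩ pick (U j)) ≤ 2*δ'*μ (pick (U j)) := by
            apply hab j a hcase (F ∩ pick (U j)) E hE haE Finset.inter_subset_right
            · intro x hx
              exact hFlt x (Finset.mem_of_mem_inter_left hx)
            · apply hherF _ _ _ hmemF
              intro x hx
              simp only [Finset.mem_union, Finset.mem_insert, Finset.mem_inter] at hx ⊢
              tauto
          have hif : (if a ∈ U j then 2*T1 else 0) ≤ (if a ∈ U (j+1) then 2*T1 else 0) := by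
            by_cases h : a ∈ U j
            · rw [if_pos h, if_pos (I3 j (j+1) (by omega) h)]
            · rw [if_neg h]
              by_cases h' : a ∈ U (j+1)
              · rw [if_pos h']; positivity
              · rw [if_neg h']
          have hmul : 2*δ'*μ (U (j+1)) = 2*δ'*μ (U j) + 2*δ'*μ (pick (U j)) := by
            rw [hμadd j]; ring
          rw [hadd]
          linarith [ihj', hpiece, hif, hmul]
        · by_cases hap : a ∈ pick (U j)
          · have haj1 : a ∈ U (j+1) := by
              rw [hUsucc, Finset.mem_union]; exact Or.inr hap
            have haj : a ∉ U j := fun h => hcase (Finset.mem_union_right _ h)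
            have hpiece : μ (F ∩ pick (U j)) ≤ μ (pick (U j)) := hμmono Finset.inter_subset_right
            have hpick2 : μ (pick (U j)) ≤ 2*T1 := (hps (U j)).2.2.2.1
            have hmul : 2*δ'*μ (U (j+1)) = 2*δ'*μ (U j) + 2*δ'*μ (pick (U j)) := by
              rw [hμadd j]; ring
            have h0 : 0 ≤ 2*δ'*μ (pick (U j)) := mul_nonneg (by linarith) (hμnonneg _)
            rw [hadd, if_pos haj1]
            rw [if_neg haj] at ihj'
            linarith
          · have haj1 : a ∉ U (j+1) := by
              rw [hUsucc, Finset.mem_union]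
              rintro (h | h)
              · exact hcase (Finset.mem_union_right _ h)
              · exact hap h
            have haUNmem : a ∈ U N := by
              rcases Finset.mem_union.1 haUN with h | h
              · exact absurd (Finset.mem_union_left _ h) hcase
              · exact h
            have hempty : F ∩ pick (U j) = ∅ := by
              rw [Finset.eq_empty_iff_forall_notMem]
              intro x hx
              have hx1 : x ∈ pick (U j) := Finset.mem_of_mem_inter_right hx
              have hx2 : x ∈ U (j+1) := by rw [hUsucc, Finset.mem_union]; exact Or.inr hx1
              have h1 : x < a := I6 (j+1) N hjN a haUNmem haj1 x hx2
              have h2 : a < x := hFlt x (Finset.mem_of_mem_inter_left hx)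
              omega
            have haj : a ∉ U j := fun h => hcase (Finset.mem_union_right _ h)
            have hmul : 2*δ'*μ (U (j+1)) = 2*δ'*μ (U j) + 2*δ'*μ (pick (U j)) := by
              rw [hμadd j]; ring
            have h0 : 0 ≤ 2*δ'*μ (pick (U j)) := mul_nonneg (by linarith) (hμnonneg _)
            rw [hadd, hempty, if_neg haj1]
            rw [if_neg haj] at ihj'
            have hz : μ (∅ : Finset ℕ) = 0 := by simp [hμdef]
            rw [hz]
            linarith
  -- conclude
  refine ⟨U N, ?_, ?_, ?_, ?_, ?_⟩
  · intro x hx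
    have := (I1 N x hx).1
    have : m ≤ m' := le_max_left _ _
    omega
  · intro x hx
    exact lt_of_lt_of_le (I1 N x hx).2 hη1η
  · linarith [(I5 N).1, hNT1]
  · linarith [(I5 N).2, hNT2]
  · intro a ha F hFsub hFlt hex
    obtain ⟨E, hE, hmemF⟩ := hex
    have hTμs : T ≤ μ (U N) := by linarith [(I5 N).1, hNT1]
    have hμspos : 0 < μ (U N) := lt_of_lt_of_le hT hTμs
    have h2T1 : 2*T1 ≤ (δ/8) * μ (U N) := by
      have he : (N:ℝ) * (2*T1) = 2*T := hNT2
      have h1 : 2*T1 ≤ (2/N) * T := by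
        rw [div_mul_eq_mul_div, le_div_iff₀ hNpos]
        linarith
      have h2 : (2/N) * T ≤ (δ/8) * T := mul_le_mul_of_nonneg_right h2N hT.le
      have h3 : (δ/8) * T ≤ (δ/8) * μ (U N) := by
        apply mul_le_mul_of_nonneg_left hTμs
        linarith
      linarith
    have hη1μs : η1 ≤ (δ/8) * μ (U N) := by
      have h2 : δ' * T1 ≤ δ' * T := mul_le_mul_of_nonneg_left hT1T hδ'.le
      have h3 : δ' * T ≤ δ' * μ (U N) := mul_le_mul_of_nonneg_left hTμs hδ'.le
      have h1 : η1 ≤ (δ/8) * T1 := by rw [← hδ'def]; exact hη1T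
      rw [hδ'def] at h2 h3
      linarith
    by_cases haE : a ∈ E
    · rcases Finset.eq_empty_or_nonempty F with rfl | hFne
      · simp only [Finset.sum_empty, hμdef]
        positivity
      · set a₂ := F.min' hFne with ha₂def
        have ha₂F : a₂ ∈ F := F.min'_mem hFne
        have ha₂UN : a₂ ∈ U N := hFsub ha₂F
        have ha₂E : a₂ ∉ E := hm'E a₂ (I1 N a₂ ha₂UN).1 E hE
        have hmem2 : (↑(E ∪ insert a₂ (F.erase a₂)) : Set ℕ) ∈ 𝓕 := by
          apply hherF _ _ _ hmemF
          intro x hx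
          simp only [Finset.mem_union, Finset.mem_insert, Finset.mem_erase] at hx ⊢
          rcases hx with hx | (rfl | hx)
          · tauto
          · exact Or.inr (Or.inr ha₂F)
          · tauto
        have hclaim2 := hclaim a₂ (F.erase a₂) E hE ha₂E
          (Finset.mem_union_right _ ha₂UN) ((Finset.erase_subset _ _).trans hFsub)
          (by
            intro x hx
            rw [Finset.mem_erase] at hx
            exact lt_of_le_of_ne (F.min'_le x hx.2) (Ne.symm hx.1)) hmem2 N le_rfl
        have herase : μ (F.erase a₂ ∩ U N) = μ (F.erase a₂) := by
          rw [Finset.inter_eq_left.2 ((Finset.erase_subset _ _).trans hFsub)]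
        rw [herase] at hclaim2
        have hift : (if a₂ ∈ U N then 2*T1 else 0) ≤ 2*T1 := by
          by_cases h : a₂ ∈ U N
          · rw [if_pos h]
          · rw [if_neg h]; positivity
        have hsum : μ (F.erase a₂) + w a₂ = μ F := Finset.sum_erase_add F w ha₂F
        have hwa₂ : w a₂ < η1 := (I1 N a₂ ha₂UN).2
        rw [hδ'def] at hclaim2
        have hhalf : (δ/2) * μ (U N) < δ * μ (U N) := by nlinarith
        have h28 : 2*(δ/8)*μ (U N) = (δ/4) * μ (U N) := by ring
        rw [h28] at hclaim2
        linarith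
    · have hclaim2 := hclaim a F E hE haE ha hFsub hFlt hmemF N le_rfl
      have hFUN : μ (F ∩ U N) = μ F := by rw [Finset.inter_eq_left.2 hFsub]
      rw [hFUN] at hclaim2
      have hift : (if a ∈ U N then 2*T1 else 0) ≤ 2*T1 := by
        by_cases h : a ∈ U N
        · rw [if_pos h]
        · rw [if_neg h]; positivity
      rw [hδ'def] at hclaim2
      have hhalf : (δ/2) * μ (U N) < δ * μ (U N) := by nlinarith
      have h28 : 2*(δ/8)*μ (U N) = (δ/4) * μ (U N) := by ring
      rw [h28] at hclaim2
      linarith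


theorem stmt11 (w : ℕ → ℝ) (hwnonneg : ∀ n, 0 ≤ w n)
    (hwdiv : ¬ Summable w) (hw0 : Tendsto w atTop (𝓝 0))
    (𝓕 : Set (Set ℕ)) (hfin : ∀ F ∈ 𝓕, F.Finite)
    (hher : ∀ F ∈ 𝓕, ∀ G ⊆ F, G ∈ 𝓕)
    (ε : ℝ) (hε : 0 < ε)
    (hfill : ∀ S : Set ℕ, S.Finite → 0 < ∑' i : S, w i →
      ∃ F ∈ 𝓕, ε * ∑' i : S, w i ≤ ∑' i : ↥(F ∩ S), w i) :
    ¬ IsCompact (chi '' 𝓕) := by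
  intro hK
  classical
  have hKc : IsClosed (chi '' 𝓕) := hK.isClosed
  -- well-foundedness of the child relation
  set r : Finset ℕ → Finset ℕ → Prop := fun E' E =>
    (↑E' : Set ℕ) ∈ 𝓕 ∧ ∃ a ∉ E, E' = insert a E with hrdef
  have hwf : WellFounded r := by
    by_contra hnwf
    have hacc : ∀ x : Finset ℕ, ¬ Acc r x → ∃ y, ¬ Acc r y ∧ r y x := by
      intro x hx
      by_contra h
      push_neg at h
      exact hx (Acc.intro x (fun y hy => not_not.1 (fun hny => h y hny hy)))
    obtain ⟨x₀, hx₀⟩ : ∃ x, ¬ Acc r x := by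
      by_contra h
      push_neg at h
      exact hnwf ⟨h⟩
    choose nxt hnacc hrel using hacc
    set f : ℕ → {p : Finset ℕ // ¬ Acc r p} := fun n =>
      Nat.rec ⟨x₀, hx₀⟩ (fun _ p => ⟨nxt p.1 p.2, hnacc p.1 p.2⟩) n with hfdef
    set g : ℕ → Finset ℕ := fun n => (f n).1 with hgdef
    have hstep : ∀ n : ℕ, r (g (n+1)) (g n) := fun n => hrel (f n).1 (f n).2
    have hsub : ∀ n : ℕ, g n ⊆ g (n+1) := by
      intro n
      obtain ⟨-, a, -, hEq⟩ := hstep n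
      rw [hEq]
      exact Finset.subset_insert _ _
    have hmono : ∀ j k : ℕ, j ≤ k → g j ⊆ g k := by
      intro j k hjk
      induction k with
      | zero => rw [Nat.le_zero] at hjk; rw [hjk]
      | succ k ih =>
          rcases Nat.lt_or_ge j (k+1) with h | h
          · exact (ih (by omega)).trans (hsub k)
          · have : j = k+1 := by omega
            rw [this]
    have hcard : ∀ n : ℕ, n ≤ (g n).card := by
      intro n
      induction n with
      | zero => omega
      | succ n ih =>
          obtain ⟨-, a, ha, hEq⟩ := hstep n
          have : (g (n+1)).card = (g n).card + 1 := by
            rw [hEq, Finset.card_insert_of_notMem ha]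
          omega
    set A : Set ℕ := ⋃ n : ℕ, (↑(g n) : Set ℕ) with hAdef
    have hGA : ∀ n : ℕ, (↑(g n) : Set ℕ) ⊆ A := fun n => Set.subset_iUnion (fun n => (↑(g n) : Set ℕ)) n
    have hg𝓕 : ∀ n : ℕ, (↑(g (n+1)) : Set ℕ) ∈ 𝓕 := fun n => (hstep n).1
    -- chi of finite approximations tends to chi A
    have htend : Tendsto (fun n => chi (↑(g (n+1)) : Set ℕ)) atTop (𝓝 (chi A)) := by
      rw [tendsto_pi_nhds]
      intro i
      by_cases hi : i ∈ A
      · obtain ⟨n₀, hn₀⟩ := Set.mem_iUnion.1 hi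
        apply tendsto_const_nhds.congr' _
        filter_upwards [eventually_ge_atTop n₀] with n hn
        have h1 : i ∈ (↑(g (n+1)) : Set ℕ) := hmono n₀ (n+1) (by omega) hn₀
        simp only [chi]
        rw [decide_eq_decide]
        exact iff_of_true hi h1
      · apply tendsto_const_nhds.congr' _
        filter_upwards [] with n
        have h1 : i ∉ (↑(g (n+1)) : Set ℕ) := fun h => hi (hGA (n+1) h)
        simp only [chi]
        rw [decide_eq_decide]
        exact iff_of_false hi h1
    have hmem : chi A ∈ chi '' 𝓕 := by
      apply hKc.mem_of_tendsto htend
      filter_upwards [] with n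
      exact ⟨_, hg𝓕 n, rfl⟩
    obtain ⟨B, hB𝓕, hBA⟩ := hmem
    have hABeq : A = B := by
      ext i
      have := congrFun hBA i
      simp only [chi] at this
      exact (decide_eq_decide.1 this).symm
    have hAfin : A.Finite := hABeq ▸ (hfin B hB𝓕)
    set t := hAfin.toFinset with htdef
    have hsubt : g (t.card + 1) ⊆ t := by
      intro x hx
      rw [Set.Finite.mem_toFinset]
      exact hGA (t.card + 1) (Finset.mem_coe.2 hx)
    have h1 : t.card + 1 ≤ (g (t.card + 1)).card := hcard _
    have h2 : (g (t.card + 1)).card ≤ t.card := Finset.card_le_card hsubt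
    omega

  -- apply the main lemma
  obtain ⟨s, hs1, hs2, hs3, hs4, hbad⟩ := mainLemma w hwnonneg hwdiv hw0 𝓕 hher hwf
    (({∅} : Finset (Finset ℕ)).sup hwf.rank) {∅} le_rfl (ε/4) (ε/4) 1
    (by positivity) (by positivity) one_pos ∅ 0
  have hsfin : (↑s : Set ℕ).Finite := s.finite_toSet
  have hsum : ∑' i : (↑s : Set ℕ), w i = ∑ i ∈ s, w i := Finset.tsum_subtype' s w
  have hμpos : 0 < ∑ i ∈ s, w i := by linarith
  have hspos : 0 < ∑' i : (↑s : Set ℕ), w i := by rw [hsum]; linarith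
  obtain ⟨F, hF, hFfill⟩ := hfill (↑s) hsfin hspos
  have hFfin : F.Finite := hfin F hF
  set G : Finset ℕ := hFfin.toFinset ∩ s with hGdef
  have hGset : (↑G : Set ℕ) = F ∩ ↑s := by
    rw [hGdef, Finset.coe_inter, Set.Finite.coe_toFinset]
  have hGsum : ∑' i : ↥(F ∩ ↑s), w i = ∑ i ∈ G, w i := by
    rw [← hGset]; exact Finset.tsum_subtype' G w
  rw [hsum, hGsum] at hFfill
  have hεpos : 0 < ε * (∑ i ∈ s, w i) := mul_pos hε hμpos
  have hGsub : G ⊆ s := Finset.inter_subset_right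
  have hG𝓕 : (↑G : Set ℕ) ∈ 𝓕 := by rw [hGset]; exact hher F hF _ Set.inter_subset_left
  rcases Finset.eq_empty_or_nonempty G with hGe | hGne
  · rw [hGe] at hFfill
    simp only [Finset.sum_empty] at hFfill
    linarith
  · set a := G.min' hGne with hadef
    have haG : a ∈ G := G.min'_mem hGne
    have hkey : ∑ i ∈ G.erase a, w i < (ε/4) * ∑ i ∈ s, w i := by
      apply hbad a (Finset.mem_union_right _ (hGsub haG)) (G.erase a)
        ((Finset.erase_subset _ _).trans hGsub)
      · intro x hx
        rw [Finset.mem_erase] at hx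
        exact lt_of_le_of_ne (G.min'_le x hx.2) (Ne.symm hx.1)
      · refine ⟨∅, Finset.mem_singleton_self _, ?_⟩
        have heq : (∅ : Finset ℕ) ∪ insert a (G.erase a) = G := by
          rw [Finset.empty_union, Finset.insert_erase haG]
        rw [heq]
        exact hG𝓕
    have hsumG : ∑ i ∈ G.erase a, w i + w a = ∑ i ∈ G, w i := Finset.sum_erase_add G w haG
    have hwa : w a < ε/4 := hs2 a (hGsub haG)
    have h1 : ε/4 ≤ (ε/4) * (∑ i ∈ s, w i) := by nlinarith
    linarith
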